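/- Let Z and B be real random variables defined on a common probability space. Suppose Z and B are independent and Z has the standard normal distribution N(0,1). Then for every u ∈ [0,1], P( 1 − |Φ(Z + B) − Φ(−Z)| ≤ u ) = u; that is, the FAB p-value computed with the random, data-derived parameter B remains uniformly distributed under the null hypothesis. -/

import Mathlib

/-!
For fixed `b`, `G z = Φ (z + b) - Φ (-z)` is continuous and strictly increasing from `-1` to `1`,
and `G (-z - b) = -G z`. Hence for `0 < t < 1` there is `a` with `G a = t`, and
`{|G| ≥ t} = (-∞, -a - b] ∪ [a, ∞)`, whose standard Gaussian measure is
`Φ (-a - b) + Φ (-a) = 1 - G a = 1 - t`. Since `B` is independent of `Z`, the probability of the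
event is the average over the law of `B` of this constant.
-/

open MeasureTheory ProbabilityTheory Filter Topology Set

/-- Φ, the standard normal cumulative distribution function. -/
noncomputable def Phi : ℝ → ℝ := fun x => ProbabilityTheory.cdf (gaussianReal 0 1) x

theorem Continuous.mem_range_of_tendsto_nhds {X α : Type*} [TopologicalSpace X]
    [PreconnectedSpace X] [LinearOrder α] [TopologicalSpace α] [OrderTopology α]
    {f : X → α} (hf : Continuous f) {l₁ l₂ : Filter X} [l₁.NeBot] [l₂.NeBot] {a b c : α}
    (h₁ : Tendsto f l₁ (𝓝 a)) (h₂ : Tendsto f l₂ (𝓝 b)) (hc : c ∈ Ioo a b) :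
    c ∈ range f :=
  mem_range_of_exists_le_of_exists_ge hf
    ((h₁.eventually (eventually_lt_nhds hc.1)).exists.imp fun _ => le_of_lt)
    ((h₂.eventually (eventually_gt_nhds hc.2)).exists.imp fun _ => le_of_lt)

theorem StrictMono.setOf_le_abs_eq {α β : Type*} [LinearOrder α]
    [AddCommGroup β] [LinearOrder β] [IsOrderedAddMonoid β] {f : α → β} (hf : StrictMono f)
    {a c : α} {t : β} (ha : f a = t) (hc : f c = -t) :
    {x | t ≤ |f x|} = Iic c ∪ Ici a := by
  subst ha
  ext x
  simp only [mem_ofPred_eq, mem_union, mem_Iic, mem_Ici, le_abs', ← hc, hf.le_iff_le]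

theorem measure_Ici_eq_ofReal_cdf_neg (μ : Measure ℝ) [IsProbabilityMeasure μ]
    (h : μ.map Neg.neg = μ) (x : ℝ) : μ (Ici x) = ENNReal.ofReal (cdf μ (-x)) := by
  rw [ofReal_cdf]
  nth_rw 1 [← h]
  rw [Measure.map_apply measurable_neg measurableSet_Ici, ← neg_Ici]
  rfl

theorem cdf_neg_of_map_neg_eq (μ : Measure ℝ) [IsProbabilityMeasure μ] [NullSingletonClass μ]
    (h : μ.map Neg.neg = μ) (x : ℝ) : cdf μ (-x) = 1 - cdf μ x := by
  have hIci : μ.real (Ici x) = cdf μ (-x) := by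
    rw [measureReal_def, measure_Ici_eq_ofReal_cdf_neg μ h, ENNReal.toReal_ofReal (cdf_nonneg _ _)]
  rw [← hIci, cdf_eq_real, ← compl_Iio, probReal_compl_eq_one_sub measurableSet_Iio,
    measureReal_congr Iio_ae_eq_Iic]

theorem Phi_sub_Phi (x y : ℝ) : Phi y - Phi x = ∫ t in x..y, gaussianPDFReal 0 1 t := by
  simp only [Phi, cdf_eq_real, measureReal_def, gaussianReal_apply_eq_integral 0 one_ne_zero,
    ENNReal.toReal_ofReal (setIntegral_nonneg measurableSet_Iic
      fun t _ => gaussianPDFReal_nonneg 0 1 t)]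
  exact intervalIntegral.integral_Iic_sub_Iic (integrable_gaussianPDFReal 0 1).integrableOn
    (integrable_gaussianPDFReal 0 1).integrableOn

theorem Phi_strictMono : StrictMono Phi := fun x y hxy => by
  have hpos : 0 < ∫ t in x..y, gaussianPDFReal 0 1 t :=
    intervalIntegral.intervalIntegral_pos_of_pos
      (integrable_gaussianPDFReal 0 1).intervalIntegrable
      (fun t => gaussianPDFReal_pos 0 1 t one_ne_zero) hxy
  linarith [Phi_sub_Phi x y]

@[fun_prop]
theorem Phi_continuous : Continuous Phi := by
  have h : Phi = fun x => Phi 0 + ∫ t in (0 : ℝ)..x, gaussianPDFReal 0 1 t := by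
    funext x
    linarith [Phi_sub_Phi 0 x]
  rw [h]
  exact continuous_const.add ((integrable_gaussianPDFReal 0 1).continuous_primitive 0)

theorem Phi_pos (x : ℝ) : 0 < Phi x :=
  (cdf_nonneg _ (x - 1)).trans_lt (Phi_strictMono (sub_one_lt x))

theorem Phi_lt_one (x : ℝ) : Phi x < 1 :=
  (Phi_strictMono (lt_add_one x)).trans_le (cdf_le_one _ (x + 1))

theorem gaussianReal_zero_one_map_neg : (gaussianReal 0 1).map Neg.neg = gaussianReal 0 1 := by
  simpa using gaussianReal_map_neg (μ := 0) (v := 1)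

theorem Phi_neg (x : ℝ) : Phi (-x) = 1 - Phi x :=
  have := nullSingletonClass_gaussianReal (μ := 0) one_ne_zero
  cdf_neg_of_map_neg_eq _ gaussianReal_zero_one_map_neg x

theorem gaussianReal_Iic (x : ℝ) : gaussianReal 0 1 (Iic x) = ENNReal.ofReal (Phi x) :=
  (ofReal_cdf _ x).symm

theorem gaussianReal_Ici (x : ℝ) : gaussianReal 0 1 (Ici x) = ENNReal.ofReal (Phi (-x)) :=
  measure_Ici_eq_ofReal_cdf_neg _ gaussianReal_zero_one_map_neg x

noncomputable def fabDiff (b z : ℝ) : ℝ := Phi (z + b) - Phi (-z)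

theorem continuous_fabDiff : Continuous fun p : ℝ × ℝ => fabDiff p.1 p.2 := by
  unfold fabDiff
  fun_prop

theorem fabDiff_strictMono (b : ℝ) : StrictMono (fabDiff b) := fun x y hxy => by
  have h₁ := Phi_strictMono (show x + b < y + b by linarith)
  have h₂ := Phi_strictMono (neg_lt_neg hxy)
  unfold fabDiff
  linarith

theorem fabDiff_neg_sub (b z : ℝ) : fabDiff b (-z - b) = -fabDiff b z := by
  simp only [fabDiff, neg_sub, sub_add_cancel]
  ring_nf

theorem abs_fabDiff_lt_one (b z : ℝ) : |fabDiff b z| < 1 := by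
  have := Phi_pos (z + b); have := Phi_lt_one (z + b)
  have := Phi_pos (-z); have := Phi_lt_one (-z)
  rw [abs_lt, fabDiff]
  constructor <;> linarith

theorem tendsto_fabDiff_atTop (b : ℝ) : Tendsto (fabDiff b) atTop (𝓝 1) := by
  have h₁ : Tendsto (fun z => Phi (z + b)) atTop (𝓝 1) :=
    (tendsto_cdf_atTop _).comp (tendsto_atTop_add_const_right _ b tendsto_id)
  have h₂ : Tendsto (fun z => Phi (-z)) atTop (𝓝 0) :=
    (tendsto_cdf_atBot _).comp tendsto_neg_atTop_atBot
  exact (sub_zero (1 : ℝ)) ▸ h₁.sub h₂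

theorem tendsto_fabDiff_atBot (b : ℝ) : Tendsto (fabDiff b) atBot (𝓝 (-1)) := by
  have h₁ : Tendsto (fun z => Phi (z + b)) atBot (𝓝 0) :=
    (tendsto_cdf_atBot _).comp (tendsto_atBot_add_const_right _ b tendsto_id)
  have h₂ : Tendsto (fun z => Phi (-z)) atBot (𝓝 1) :=
    (tendsto_cdf_atTop _).comp tendsto_neg_atBot_atTop
  exact (zero_sub (1 : ℝ)) ▸ h₁.sub h₂

theorem gaussianReal_setOf_le_abs_fabDiff_of_mem_Ioo (b : ℝ) {t : ℝ} (ht : t ∈ Ioo 0 1) :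
    gaussianReal 0 1 {z | t ≤ |fabDiff b z|} = ENNReal.ofReal (1 - t) := by
  obtain ⟨a, ha⟩ : t ∈ range (fabDiff b) :=
    (continuous_fabDiff.comp (Continuous.prodMk_right b)).mem_range_of_tendsto_nhds
      (tendsto_fabDiff_atBot b) (tendsto_fabDiff_atTop b) ⟨by linarith [ht.1], ht.2⟩
  have hc : fabDiff b (-a - b) = -t := by rw [fabDiff_neg_sub, ha]
  have hca : -a - b < a := (fabDiff_strictMono b).lt_iff_lt.mp (by linarith [ht.1])
  have hPhi : Phi (-a - b) = 1 - Phi (a + b) := by rw [← neg_add', Phi_neg]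
  rw [(fabDiff_strictMono b).setOf_le_abs_eq ha hc,
    measure_union (Iic_disjoint_Ici.mpr hca.not_ge) measurableSet_Ici, gaussianReal_Iic,
    gaussianReal_Ici, ← ENNReal.ofReal_add (Phi_pos _).le (Phi_pos _).le]
  unfold fabDiff at ha
  congr 1
  linarith

theorem gaussianReal_setOf_le_abs_fabDiff (b : ℝ) {t : ℝ} (ht : t ∈ Icc 0 1) :
    gaussianReal 0 1 {z | t ≤ |fabDiff b z|} = ENNReal.ofReal (1 - t) := by
  rcases ht.1.eq_or_lt with rfl | ht₀
  · simp
  rcases ht.2.eq_or_lt with rfl | ht₁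
  · simp [(abs_fabDiff_lt_one b _).not_ge]
  exact gaussianReal_setOf_le_abs_fabDiff_of_mem_Ioo b ⟨ht₀, ht₁⟩

theorem ProbabilityTheory.IndepFun.measure_preimage_eq_of_forall_slice {Ω α β : Type*}
    [MeasurableSpace Ω] [MeasurableSpace α] [MeasurableSpace β]
    {P : Measure Ω} [IsProbabilityMeasure P]
    {X : Ω → α} {Y : Ω → β} (hX : Measurable X) (hY : Measurable Y) (hXY : IndepFun X Y P)
    {S : Set (α × β)} (hS : MeasurableSet S) {c : ENNReal}
    (hc : ∀ y, P.map X {x | (x, y) ∈ S} = c) :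
    P {ω | (X ω, Y ω) ∈ S} = c := by
  have hmap : P.map (fun ω => (X ω, Y ω)) = (P.map X).prod (P.map Y) :=
    (indepFun_iff_map_prod_eq_prod_map_map hX.aemeasurable hY.aemeasurable).mp hXY
  have := Measure.isProbabilityMeasure_map (μ := P) hY.aemeasurable
  change P ((fun ω => (X ω, Y ω)) ⁻¹' S) = c
  rw [← Measure.map_apply (hX.prodMk hY) hS, hmap, Measure.prod_apply_symm hS]
  simp [preimage, hc]

theorem stmt_14 {Ω : Type*} [MeasurableSpace Ω] (P : Measure Ω) [IsProbabilityMeasure P]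
    (Z B : Ω → ℝ) (hZm : Measurable Z) (hBm : Measurable B)
    (hindep : ProbabilityTheory.IndepFun Z B P)
    (hZ : P.map Z = gaussianReal 0 1) (u : ℝ) (hu : u ∈ Set.Icc (0 : ℝ) 1) :
    P {ω | 1 - |Phi (Z ω + B ω) - Phi (-Z ω)| ≤ u} = ENNReal.ofReal u := by
  have ht : 1 - u ∈ Icc (0 : ℝ) 1 := ⟨by linarith [hu.2], by linarith [hu.1]⟩
  have hS : MeasurableSet {p : ℝ × ℝ | 1 - u ≤ |fabDiff p.2 p.1|} :=
    measurableSet_le measurable_const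
      (continuous_fabDiff.comp continuous_swap).abs.measurable
  have key := hindep.measure_preimage_eq_of_forall_slice hZm hBm hS fun b => by
    rw [hZ]
    exact gaussianReal_setOf_le_abs_fabDiff b ht
  simp only [sub_sub_cancel, fabDiff, mem_ofPred_eq] at key
  simpa only [sub_le_comm] using key
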